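/- Branch point lemma for the special hypertree family (Lemma 7.4): Fix an integer r ≥ 2 and ℓ ≥ 1, and let 𝒯_ℓ be the family of rooted r-uniform hypertrees defined below. If α, β ∈ 𝒯_ℓ are distinct with α ∩ β ≠ ∅ (they share at least one edge), and the number of branch points b = |V(α △ β) ∩ V(γ)| equals 1, where γ = (α ∩ β) ∪ {1} is the core, then necessarily a = |α ∩ β| ≥ ℓ. -/

import Mathlib

/-- The type of hyperedges: r-element subsets of [n]. -/
abbrev HEdge (n r : ℕ) := {s : Finset (Fin n) // s.card = r}

/-- The vertex set of a hypergraph (a finite set of hyperedges). -/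
def vset {n r : ℕ} (T : Finset (HEdge n r)) : Finset (Fin n) :=
  T.biUnion fun e => e.1

/-- A hypergraph is connected: any two of its (covered) vertices are joined by a
chain of pairwise-intersecting edges of T. -/
def HConnected {n r : ℕ} (T : Finset (HEdge n r)) : Prop :=
  ∀ u v : Fin n, u ∈ vset T → v ∈ vset T →
    ∃ (p : ℕ) (c : Fin (p + 1) → HEdge n r),
      (∀ j, c j ∈ T) ∧ u ∈ (c 0).1 ∧ v ∈ (c (Fin.last p)).1 ∧
      ∀ j : Fin p, ∃ w : Fin n, w ∈ (c j.castSucc).1 ∧ w ∈ (c j.succ).1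

/-- An r-uniform hypertree: a nonempty connected r-uniform hypergraph with the
minimum possible number of edges, (r−1)|E| + 1 = |V|.  (This is equivalent to being
built from a single hyperedge by repeatedly appending a hyperedge sharing exactly
one vertex with the current hypergraph.) -/
def IsHypertree {n r : ℕ} (T : Finset (HEdge n r)) : Prop :=
  T.Nonempty ∧ HConnected T ∧ (r - 1) * T.card + 1 = (vset T).card

/-- Membership in the family 𝒯_ℓ of rooted hypertrees: α is a hypertree rooted at
`root` of the following shape.  There are two distinct root-incident edges e₁, e₂
meeting only at the root, and two vertex-disjoint hypertrees T₁, T₂ with ℓ edges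
each, not containing the root; e₁ meets T₁ in exactly one vertex and avoids T₂, e₂
meets T₂ in exactly one vertex and avoids T₁, and α = {e₁, e₂} ∪ T₁ ∪ T₂.  Thus the
root has degree two, in each root-incident edge exactly one of the r−1 non-root
vertices has degree ≥ 2 in α, and deleting the root together with the 2(r−2)
degree-one vertices of the root-incident edges decomposes α into two disjoint
hypertrees with ℓ edges each. -/
def InTreeFam {n r : ℕ} (root : Fin n) (l : ℕ) (α : Finset (HEdge n r)) : Prop :=
  IsHypertree α ∧
  ∃ (e₁ e₂ : HEdge n r) (T₁ T₂ : Finset (HEdge n r)),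
    α = insert e₁ (insert e₂ (T₁ ∪ T₂)) ∧ e₁ ≠ e₂ ∧
    e₁ ∉ T₁ ∪ T₂ ∧ e₂ ∉ T₁ ∪ T₂ ∧ Disjoint T₁ T₂ ∧
    IsHypertree T₁ ∧ IsHypertree T₂ ∧ T₁.card = l ∧ T₂.card = l ∧
    root ∈ e₁.1 ∧ root ∈ e₂.1 ∧ e₁.1 ∩ e₂.1 = {root} ∧
    root ∉ vset T₁ ∧ root ∉ vset T₂ ∧ Disjoint (vset T₁) (vset T₂) ∧
    (e₁.1 ∩ vset T₁).card = 1 ∧ e₁.1 ∩ vset T₂ = ∅ ∧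
    (e₂.1 ∩ vset T₂).card = 1 ∧ e₂.1 ∩ vset T₁ = ∅

/-- Number of connected components of a hypergraph given by its edge set. -/
noncomputable def numComponents {n r : ℕ} (γ : Finset (HEdge n r)) : ℕ :=
  Nat.card (Quot fun e e' : {x : HEdge n r // x ∈ γ} => ¬ Disjoint e.1.1 e'.1.1)

/-- Number of connected components of the core γ = (α∩β) ∪ {root}: vertex `root`
counts as an extra component when it is isolated in α∩β. -/
noncomputable def coreComponents {n r : ℕ} (root : Fin n)
    (γ : Finset (HEdge n r)) : ℕ :=
  numComponents γ + (if root ∈ vset γ then 0 else 1)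

/-- The vertex set of the core γ = (α∩β) ∪ {root}. -/
def coreVset {n r : ℕ} (root : Fin n) (γ : Finset (HEdge n r)) : Finset (Fin n) :=
  insert root (vset γ)


/-!
The tree α is the union of the two sides `{e₁} ∪ T₁` and `{e₂} ∪ T₂`, each of them connected.
If some `Tᵢ` lies in β we are done, since `|Tᵢ| = ℓ`. Otherwise both sides contain an edge
outside β, and some side contains a shared edge; walking inside that side from a shared edge to
an unshared one we meet a branch point in the vertex set of its subtree. The other side yields a
second branch point: either in the same way, inside the disjoint other subtree, or, when its
root edge `e₂` is not shared, the root itself. Hence b ≥ 2.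
-/

open Finset Function Relation

theorem Relation.ReflTransGen.exists_boundary {α : Type*} {R : α → α → Prop} {p : α → Prop}
    {a b : α} (h : ReflTransGen R a b) (ha : p a) (hb : ¬ p b) :
    ∃ c d, R c d ∧ p c ∧ ¬ p d := by
  induction h with
  | refl => exact absurd ha hb
  | @tail c d _ hcd ih =>
    by_cases hc : p c
    · exact ⟨c, d, hcd, hc, hb⟩
    · exact ih hc

section BranchPoints

variable {n r : ℕ}

lemma mem_vset {T : Finset (HEdge n r)} {w : Fin n} : w ∈ vset T ↔ ∃ e ∈ T, w ∈ e.1 :=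
  mem_biUnion

def Overlaps (T : Finset (HEdge n r)) (a b : HEdge n r) : Prop :=
  a ∈ T ∧ b ∈ T ∧ ¬ Disjoint a.1 b.1

instance (T : Finset (HEdge n r)) : Std.Symm (Overlaps T) :=
  ⟨fun _ _ ⟨ha, hb, hd⟩ => ⟨hb, ha, fun h => hd h.symm⟩⟩

lemma overlaps_of_mem {T : Finset (HEdge n r)} {a b : HEdge n r} {w : Fin n}
    (ha : a ∈ T) (hb : b ∈ T) (hwa : w ∈ a.1) (hwb : w ∈ b.1) : Overlaps T a b :=
  ⟨ha, hb, not_disjoint_iff.mpr ⟨w, hwa, hwb⟩⟩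

lemma Overlaps.mono {T T' : Finset (HEdge n r)} (h : T ⊆ T') {a b : HEdge n r}
    (hab : Overlaps T a b) : Overlaps T' a b :=
  ⟨h hab.1, h hab.2.1, hab.2.2⟩

lemma HConnected.reflTransGen_overlaps {T : Finset (HEdge n r)} (hT : HConnected T)
    (hr : 0 < r) {a b : HEdge n r} (ha : a ∈ T) (hb : b ∈ T) :
    ReflTransGen (Overlaps T) a b := by
  obtain ⟨u, hu⟩ := card_pos.mp (a.2 ▸ hr)
  obtain ⟨v, hv⟩ := card_pos.mp (b.2 ▸ hr)
  obtain ⟨p, c, hcT, hu0, hvl, hstep⟩ :=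
    hT u v (mem_vset.mpr ⟨a, ha, hu⟩) (mem_vset.mpr ⟨b, hb, hv⟩)
  have hchain : ReflTransGen (Overlaps T on c) 0 (Fin.last p) := by
    refine reflTransGen_of_succ_of_le _ (fun i hi => ?_) (Fin.zero_le _)
    obtain ⟨j, rfl⟩ := Fin.exists_castSucc_eq.mpr hi.2.ne
    obtain ⟨w, hw, hw'⟩ := hstep j
    rw [Fin.orderSucc_castSucc]
    exact overlaps_of_mem (hcT _) (hcT _) hw hw'
  exact ((hchain.lift c fun _ _ h => h).head (overlaps_of_mem ha (hcT 0) hu hu0)).tail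
    (overlaps_of_mem (hcT _) hb hvl hv)

lemma HConnected.reflTransGen_overlaps_insert {T : Finset (HEdge n r)} (hT : HConnected T)
    (hr : 0 < r) {e : HEdge n r} (he : (e.1 ∩ vset T).Nonempty) {a b : HEdge n r}
    (ha : a ∈ insert e T) (hb : b ∈ insert e T) :
    ReflTransGen (Overlaps (insert e T)) a b := by
  obtain ⟨w, hw⟩ := he
  obtain ⟨t, ht, hwt⟩ := mem_vset.mp (mem_inter.mp hw).2
  have hsub : T ⊆ insert e T := subset_insert e T
  have from_e : ∀ x ∈ insert e T, ReflTransGen (Overlaps (insert e T)) e x := by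
    intro x hx
    rcases mem_insert.mp hx with rfl | hx
    · exact .refl
    · exact .head (overlaps_of_mem (mem_insert_self e T) (hsub ht) (mem_inter.mp hw).1 hwt)
        (ReflTransGen.mono (fun _ _ => Overlaps.mono hsub) _ _ (hT.reflTransGen_overlaps hr ht hx))
  exact (Std.Symm.symm _ _ (from_e a ha)).trans (from_e b hb)

def branchPoints (root : Fin n) (α β : Finset (HEdge n r)) : Finset (Fin n) :=
  vset ((α \ β) ∪ (β \ α)) ∩ coreVset root (α ∩ β)

lemma mem_branchPoints_of_mem_of_mem {root w : Fin n} {α β : Finset (HEdge n r)}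
    {c d : HEdge n r} (hc : c ∈ α ∩ β) (hd : d ∈ α \ β) (hwc : w ∈ c.1) (hwd : w ∈ d.1) :
    w ∈ branchPoints root α β :=
  mem_inter.mpr ⟨mem_vset.mpr ⟨d, mem_union_left _ hd, hwd⟩,
    mem_insert_of_mem (mem_vset.mpr ⟨c, hc, hwc⟩)⟩

lemma root_mem_branchPoints {root : Fin n} {α β : Finset (HEdge n r)} {e : HEdge n r}
    (he : e ∈ α \ β) (hroot : root ∈ e.1) : root ∈ branchPoints root α β :=
  mem_inter.mpr ⟨mem_vset.mpr ⟨e, mem_union_left _ he, hroot⟩, mem_insert_self _ _⟩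

lemma exists_mem_vset_mem_branchPoints (root : Fin n) {α β : Finset (HEdge n r)} (hr : 0 < r)
    {e : HEdge n r} {T : Finset (HEdge n r)} (hT : HConnected T)
    (he : (e.1 ∩ vset T).Nonempty) (hsub : insert e T ⊆ α)
    {h g : HEdge n r} (hh : h ∈ insert e T) (hhβ : h ∈ β) (hg : g ∈ insert e T) (hgβ : g ∉ β) :
    ∃ w ∈ vset T, w ∈ branchPoints root α β := by
  obtain ⟨c, d, ⟨hc, hd, hcd⟩, hcβ, hdβ⟩ :=
    (hT.reflTransGen_overlaps_insert hr he hh hg).exists_boundary hhβ hgβ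
  obtain ⟨w, hwc, hwd⟩ := not_disjoint_iff.mp hcd
  refine ⟨w, ?_, mem_branchPoints_of_mem_of_mem
    (mem_inter.mpr ⟨hsub hc, hcβ⟩) (mem_sdiff.mpr ⟨hsub hd, hdβ⟩) hwc hwd⟩
  rcases mem_insert.mp hd with rfl | hdT
  · exact mem_vset.mpr ⟨c, (mem_insert.mp hc).resolve_left (ne_of_mem_of_not_mem hcβ hdβ), hwc⟩
  · exact mem_vset.mpr ⟨d, hdT, hwd⟩

lemma one_lt_card_branchPoints {root : Fin n} {α β : Finset (HEdge n r)} (hr : 0 < r)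
    {e₁ e₂ : HEdge n r} {T₁ T₂ : Finset (HEdge n r)} (hT₁ : HConnected T₁) (hT₂ : HConnected T₂)
    (he₁ : (e₁.1 ∩ vset T₁).Nonempty) (he₂ : (e₂.1 ∩ vset T₂).Nonempty)
    (hs₁ : insert e₁ T₁ ⊆ α) (hs₂ : insert e₂ T₂ ⊆ α) (hroot : root ∈ e₂.1)
    (hroot₁ : root ∉ vset T₁) (hdisj : Disjoint (vset T₁) (vset T₂))
    {h g₁ g₂ : HEdge n r} (hh : h ∈ insert e₁ T₁) (hhβ : h ∈ β)
    (hg₁ : g₁ ∈ T₁) (hg₁β : g₁ ∉ β) (hg₂ : g₂ ∈ T₂) (hg₂β : g₂ ∉ β) :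
    1 < (branchPoints root α β).card := by
  obtain ⟨w₁, hw₁T, hw₁⟩ := exists_mem_vset_mem_branchPoints root hr hT₁ he₁ hs₁ hh hhβ
    (mem_insert_of_mem hg₁) hg₁β
  refine one_lt_card.mpr ⟨w₁, hw₁, ?_⟩
  by_cases he₂β : e₂ ∈ β
  · obtain ⟨w₂, hw₂T, hw₂⟩ := exists_mem_vset_mem_branchPoints root hr hT₂ he₂ hs₂
      (mem_insert_self e₂ T₂) he₂β (mem_insert_of_mem hg₂) hg₂β
    exact ⟨w₂, hw₂, fun heq => disjoint_left.mp hdisj hw₁T (heq ▸ hw₂T)⟩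
  · have hunshared : e₂ ∈ α \ β := mem_sdiff.mpr ⟨hs₂ (mem_insert_self e₂ T₂), he₂β⟩
    exact ⟨root, root_mem_branchPoints hunshared hroot, fun heq => hroot₁ (heq ▸ hw₁T)⟩

end BranchPoints

theorem branch_point_lemma_general (n r l : ℕ) (hn : 0 < n)
    (α β : Finset (HEdge n r))
    (hα : InTreeFam ⟨0, hn⟩ l α) (hshare : (α ∩ β).Nonempty)
    (hb : (vset ((α \ β) ∪ (β \ α)) ∩ coreVset ⟨0, hn⟩ (α ∩ β)).card = 1) :
    l ≤ (α ∩ β).card := by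
  obtain ⟨-, e₁, e₂, T₁, T₂, rfl, -, -, -, -, hT₁, hT₂, hcard₁, hcard₂, hroot₁, hroot₂, -,
    hroot₁', hroot₂', hdisj, he₁, -, he₂, -⟩ := hα
  have he₁ : (e₁.1 ∩ vset T₁).Nonempty := card_pos.mp (he₁ ▸ one_pos)
  have he₂ : (e₂.1 ∩ vset T₂).Nonempty := card_pos.mp (he₂ ▸ one_pos)
  have hr : 0 < r := e₁.2 ▸ card_pos.mpr (he₁.mono inter_subset_left)
  have hs₁ : insert e₁ T₁ ⊆ insert e₁ (insert e₂ (T₁ ∪ T₂)) := by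
    intro x; simp only [mem_insert, mem_union]; tauto
  have hs₂ : insert e₂ T₂ ⊆ insert e₁ (insert e₂ (T₁ ∪ T₂)) := by
    intro x; simp only [mem_insert, mem_union]; tauto
  by_cases hβ₁ : T₁ ⊆ β
  · exact hcard₁ ▸ card_le_card (subset_inter ((subset_insert _ _).trans hs₁) hβ₁)
  by_cases hβ₂ : T₂ ⊆ β
  · exact hcard₂ ▸ card_le_card (subset_inter ((subset_insert _ _).trans hs₂) hβ₂)
  obtain ⟨g₁, hg₁, hg₁β⟩ := not_subset.mp hβ₁
  obtain ⟨g₂, hg₂, hg₂β⟩ := not_subset.mp hβ₂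
  obtain ⟨h, hhα, hhβ⟩ := hshare.imp fun _ => mem_inter.mp
  have hside : h ∈ insert e₁ T₁ ∨ h ∈ insert e₂ T₂ := by
    simp only [mem_insert, mem_union] at hhα ⊢; tauto
  have hb : (branchPoints ⟨0, hn⟩ _ β).card = 1 := hb
  refine absurd hb (ne_of_gt ?_)
  rcases hside with hh | hh
  · exact one_lt_card_branchPoints hr hT₁.2.1 hT₂.2.1 he₁ he₂ hs₁ hs₂ hroot₂ hroot₁' hdisj
      hh hhβ hg₁ hg₁β hg₂ hg₂β
  · exact one_lt_card_branchPoints hr hT₂.2.1 hT₁.2.1 he₂ he₁ hs₂ hs₁ hroot₁ hroot₂' hdisj.symm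
      hh hhβ hg₂ hg₂β hg₁ hg₁β

/-- Lemma 7.4 (branch point lemma for the special hypertree family): if α, β ∈ 𝒯_ℓ
are distinct and share at least one edge, and the number of branch points
b = |V(α△β) ∩ V(γ)| equals 1 (where γ = (α∩β) ∪ {1} is the core), then
a = |α∩β| ≥ ℓ. -/
theorem branch_point_lemma (n r l : ℕ) (hn : 0 < n) (hr : 2 ≤ r) (hl : 1 ≤ l)
    (α β : Finset (HEdge n r))
    (hα : InTreeFam ⟨0, hn⟩ l α) (hβ : InTreeFam ⟨0, hn⟩ l β)
    (hne : α ≠ β) (hshare : (α ∩ β).Nonempty)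
    (hb : (vset ((α \ β) ∪ (β \ α)) ∩ coreVset ⟨0, hn⟩ (α ∩ β)).card = 1) :
    l ≤ (α ∩ β).card :=
  branch_point_lemma_general n r l hn α β hα hshare hb
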